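/- In the additive Schwarz setting (V = Σ_j R_j V_j, B = Σ_j R_j S_j^{-1} R_jᵗ), the maximal eigenvalue satisfies λ_max(BS) = max_{v≠0} a(v,v) / ( min over decompositions v = Σ_j R_j v_j of Σ_j a_j(v_j, v_j) ). -/

import Mathlib

/-!
The ranges of the `R j` span `V`, so `B` is symmetric positive definite. If `B w = v`, the
decomposition `u j = Sj⁻¹ (R j)ᵗ w` of `v` has energy `⟪w, v⟫`, and any other decomposition exceeds
it by the `Sj`-energy of the difference; hence the minimal energy of `v = B w` is `⟪w, B w⟫`. The
quotient to maximise is then the generalized Rayleigh quotient `⟪B S B w, w⟫ / ⟪B w, w⟫`. It attains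
its maximum `μ` on the unit sphere, and at a maximiser `x` the positive operator `μ B - B S B` has
vanishing quadratic form, so `B S B x = μ B x` and `B x` is an eigenvector of `B S`. Conversely an
eigenvector `w` of `B S` for `λ_max` is `B (λ_max⁻¹ S w)`, which realises the quotient `λ_max`.
-/

open scoped RealInnerProductSpace

namespace LinearMap

variable {E : Type*} [NormedAddCommGroup E] [InnerProductSpace ℝ E]

theorem IsSymmetric.inner_map_add_smul_self {T : E →ₗ[ℝ] E} (hT : T.IsSymmetric) (x y : E)
    (t : ℝ) : ⟪T (x + t • y), x + t • y⟫ = ⟪T y, y⟫ * (t * t) + 2 * ⟪T x, y⟫ * t + ⟪T x, x⟫ := by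
  have hyx : ⟪T y, x⟫ = ⟪T x, y⟫ := by rw [hT, real_inner_comm]
  simp only [map_add, map_smul, inner_add_left, inner_add_right, real_inner_smul_left,
    real_inner_smul_right, hyx]
  ring

theorem IsPositive.inner_map_sq_le {T : E →ₗ[ℝ] E} (hT : T.IsPositive) (x y : E) :
    ⟪T x, y⟫ ^ 2 ≤ ⟪T x, x⟫ * ⟪T y, y⟫ := by
  have h := discrim_le_zero fun t => hT.isSymmetric.inner_map_add_smul_self x y t ▸
    hT.inner_nonneg_left (x + t • y)
  rw [discrim] at h
  linarith

theorem IsPositive.map_eq_zero_of_inner_map_self_eq_zero {T : E →ₗ[ℝ] E} (hT : T.IsPositive)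
    {x : E} (hx : ⟪T x, x⟫ = 0) : T x = 0 := by
  have h := hT.inner_map_sq_le x (T x)
  rw [hx, zero_mul] at h
  exact inner_self_eq_zero.mp (pow_eq_zero_iff two_ne_zero |>.mp (le_antisymm h (sq_nonneg _)))

theorem injective_of_inner_map_self_pos {T : E →ₗ[ℝ] E} (hT : ∀ x, x ≠ 0 → 0 < ⟪T x, x⟫) :
    Function.Injective T := by
  refine (injective_iff_map_eq_zero T).mpr fun x hx => ?_
  by_contra hx0
  simpa [hx] using hT x hx0

theorem IsSymmetric.of_comp_eq_id {T T' : E →ₗ[ℝ] E} (hT : T.IsSymmetric)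
    (h : T ∘ₗ T' = id) : T'.IsSymmetric := fun x y => by
  have hTT' : ∀ z, T (T' z) = z := LinearMap.congr_fun h
  calc ⟪T' x, y⟫ = ⟪T' x, T (T' y)⟫ := by rw [hTT']
    _ = ⟪T (T' x), T' y⟫ := (hT _ _).symm
    _ = ⟪x, T' y⟫ := by rw [hTT']

theorem inner_map_self_pos_of_comp_eq_id {T T' : E →ₗ[ℝ] E}
    (hTpos : ∀ x, x ≠ 0 → 0 < ⟪T x, x⟫) (h : T ∘ₗ T' = id) {x : E} (hx : x ≠ 0) :
    0 < ⟪T' x, x⟫ := by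
  have hTT' : T (T' x) = x := LinearMap.congr_fun h x
  have hT'x : T' x ≠ 0 := fun h0 => hx (by rw [← hTT', h0, map_zero])
  simpa [hTT', real_inner_comm] using hTpos _ hT'x

theorem apply_inv_smul_eq_of_hasEigenvector {B S : E →ₗ[ℝ] E} (hB : Function.Injective B)
    (hS : ∀ x, x ≠ 0 → 0 < ⟪S x, x⟫) {μ : ℝ} {w : E}
    (hw : Module.End.HasEigenvector (B ∘ₗ S) μ w) :
    B (μ⁻¹ • S w) = w ∧ ⟪S w, w⟫ / ⟪μ⁻¹ • S w, w⟫ = μ := by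
  have hBSw : B (S w) = μ • w := by simpa using hw.apply_eq_smul
  have hSw := hS w hw.2
  have hμ : μ ≠ 0 := by
    rintro rfl
    have hSw0 : S w = 0 := hB (by rw [hBSw, zero_smul, map_zero])
    simp [hSw0] at hSw
  refine ⟨by rw [map_smul, hBSw, inv_smul_smul₀ hμ], ?_⟩
  rw [real_inner_smul_left]
  field_simp

variable [FiniteDimensional ℝ E]

theorem exists_forall_inner_map_self_le_mul [Nontrivial E] (A : E →ₗ[ℝ] E) {P : E →ₗ[ℝ] E}
    (hP : ∀ x, x ≠ 0 → 0 < ⟪P x, x⟫) :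
    ∃ x ≠ 0, ∃ μ : ℝ, ⟪A x, x⟫ = μ * ⟪P x, x⟫ ∧ ∀ v, ⟪A v, v⟫ ≤ μ * ⟪P v, v⟫ := by
  set q : E → ℝ := fun v => ⟪A v, v⟫ / ⟪P v, v⟫
  have hq_smul : ∀ (c : ℝ) v, c ≠ 0 → q (c • v) = q v := fun c v hc => by
    simp only [q, map_smul, real_inner_smul_left, real_inner_smul_right, ← mul_assoc]
    exact mul_div_mul_left _ _ (mul_ne_zero hc hc)
  have hsphere : ∀ v ∈ Metric.sphere (0 : E) 1, v ≠ 0 := fun v hv =>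
    ne_zero_of_mem_unit_sphere ⟨v, hv⟩
  have hq_cont : ContinuousOn q (Metric.sphere (0 : E) 1) :=
    (A.continuous_of_finiteDimensional.inner continuous_id).continuousOn.div
      (P.continuous_of_finiteDimensional.inner continuous_id).continuousOn
      fun v hv => (hP v (hsphere v hv)).ne'
  obtain ⟨x, hx, hxmax⟩ := (isCompact_sphere (0 : E) 1).exists_isMaxOn
    (NormedSpace.sphere_nonempty.mpr zero_le_one) hq_cont
  refine ⟨x, hsphere x hx, q x, (div_mul_cancel₀ _ (hP x (hsphere x hx)).ne').symm, fun v => ?_⟩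
  rcases eq_or_ne v 0 with rfl | hv
  · simp
  have hv' : ‖v‖⁻¹ • v ∈ Metric.sphere (0 : E) 1 := by
    simp [norm_smul, norm_ne_zero_iff.mpr hv]
  have hle : q v ≤ q x := hq_smul _ v (inv_ne_zero (norm_ne_zero_iff.mpr hv)) ▸ hxmax hv'
  exact (div_le_iff₀ (hP v hv)).mp hle

theorem IsSymmetric.exists_eq_smul_forall_inner_map_self_le [Nontrivial E] {A P : E →ₗ[ℝ] E}
    (hA : A.IsSymmetric) (hP : P.IsSymmetric) (hPpos : ∀ x, x ≠ 0 → 0 < ⟪P x, x⟫) :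
    ∃ x ≠ 0, ∃ μ : ℝ, A x = μ • P x ∧ ∀ v, ⟪A v, v⟫ ≤ μ * ⟪P v, v⟫ := by
  obtain ⟨x, hx, μ, hxμ, hle⟩ := exists_forall_inner_map_self_le_mul A hPpos
  have hT : (μ • P - A).IsPositive := by
    refine (isPositive_iff _).mpr ⟨(hP.smul (by simp)).sub hA, fun v => ?_⟩
    simpa [inner_sub_left, real_inner_smul_left] using hle v
  have hTx : (μ • P - A) x = 0 :=
    hT.map_eq_zero_of_inner_map_self_eq_zero (by simp [inner_sub_left, real_inner_smul_left, hxμ])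
  exact ⟨x, hx, μ, (sub_eq_zero.mp hTx).symm, hle⟩

theorem exists_hasEigenvalue_comp_forall_inner_le [Nontrivial E] {B S : E →ₗ[ℝ] E}
    (hB : B.IsSymmetric) (hBpos : ∀ x, x ≠ 0 → 0 < ⟪B x, x⟫) (hS : S.IsSymmetric) :
    ∃ μ, Module.End.HasEigenvalue (B ∘ₗ S) μ ∧ ∀ w, ⟪S (B w), B w⟫ ≤ μ * ⟪B w, w⟫ := by
  have hBSB : (B ∘ₗ S ∘ₗ B).IsSymmetric := fun x y => by
    simp only [comp_apply, hB _ y, hS _ (B y), hB x]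
  obtain ⟨x, hx, μ, hxμ, hle⟩ := hBSB.exists_eq_smul_forall_inner_map_self_le hB hBpos
  have hBinj := injective_of_inner_map_self_pos hBpos
  have hSBx : S (B x) = μ • x := hBinj (by simpa using hxμ)
  refine ⟨μ, Module.End.hasEigenvalue_of_hasEigenvector (x := B x) ⟨?_, ?_⟩, fun w => ?_⟩
  · simp [hSBx]
  · exact fun h => hx (hBinj (by rw [h, map_zero]))
  · simpa [hB (S (B w)) w, real_inner_comm w] using hle w

end LinearMap

section AdditiveSchwarz

open LinearMap

variable {ι : Type*} {Vj : ι → Type*} [∀ j, NormedAddCommGroup (Vj j)]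
  [∀ j, InnerProductSpace ℝ (Vj j)] [∀ j, FiniteDimensional ℝ (Vj j)]
  {V : Type*} [NormedAddCommGroup V] [InnerProductSpace ℝ V] [FiniteDimensional ℝ V]

theorem exists_adjoint_apply_ne_zero (R : ∀ j, Vj j →ₗ[ℝ] V) (hR : ⨆ j, range (R j) = ⊤)
    {v : V} (hv : v ≠ 0) :
    ∃ j, adjoint (R j) v ≠ 0 := by
  by_contra! h
  have hv' : v ∈ (⨆ j, range (R j))ᗮ := by
    rw [← Submodule.iInf_orthogonal, Submodule.mem_iInf]
    exact fun j => (orthogonal_range (R j)).symm ▸ h j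
  rw [hR, Submodule.top_orthogonal_eq_bot] at hv'
  exact hv hv'

variable [Fintype ι]

noncomputable def additiveSchwarz (R : ∀ j, Vj j →ₗ[ℝ] V) (T : ∀ j, Vj j →ₗ[ℝ] Vj j) :
    V →ₗ[ℝ] V :=
  ∑ j, R j ∘ₗ T j ∘ₗ adjoint (R j)

variable (R : ∀ j, Vj j →ₗ[ℝ] V) {T : ∀ j, Vj j →ₗ[ℝ] Vj j}

theorem additiveSchwarz_apply (v : V) :
    additiveSchwarz R T v = ∑ j, R j (T j (adjoint (R j) v)) := by
  simp [additiveSchwarz]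

theorem inner_additiveSchwarz_apply (v w : V) :
    ⟪additiveSchwarz R T v, w⟫ = ∑ j, ⟪T j (adjoint (R j) v), adjoint (R j) w⟫ := by
  simp [additiveSchwarz_apply, sum_inner, adjoint_inner_right]

theorem isSymmetric_additiveSchwarz (hT : ∀ j, (T j).IsSymmetric) :
    (additiveSchwarz R T).IsSymmetric :=
  isSymmetric_sum _ fun j _ => (hT j).conj_adjoint (R j)

theorem inner_additiveSchwarz_self_pos (hT : ∀ j x, x ≠ 0 → 0 < ⟪T j x, x⟫)
    (hR : ⨆ j, range (R j) = ⊤) {v : V} (hv : v ≠ 0) : 0 < ⟪additiveSchwarz R T v, v⟫ := by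
  obtain ⟨j, hj⟩ := exists_adjoint_apply_ne_zero R hR hv
  have hT' : ∀ j x, 0 ≤ ⟪T j x, x⟫ := fun j x => by
    rcases eq_or_ne x 0 with rfl | hx
    · simp
    · exact (hT j x hx).le
  rw [inner_additiveSchwarz_apply]
  exact Finset.sum_pos' (fun i _ => hT' i _) ⟨j, Finset.mem_univ j, hT j _ hj⟩

theorem isLeast_energy_additiveSchwarz {S : ∀ j, Vj j →ₗ[ℝ] Vj j} (hS : ∀ j, (S j).IsPositive)
    (hST : ∀ j, S j ∘ₗ T j = LinearMap.id) (w : V) :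
    IsLeast {t : ℝ | ∃ u : ∀ j, Vj j,
      ∑ j, R j (u j) = additiveSchwarz R T w ∧ t = ∑ j, ⟪S j (u j), u j⟫}
      ⟪w, additiveSchwarz R T w⟫ := by
  set g : ∀ j, Vj j := fun j => T j (adjoint (R j) w)
  have hSg : ∀ j, S j (g j) = adjoint (R j) w := fun j => LinearMap.congr_fun (hST j) _
  have hg : ∑ j, R j (g j) = additiveSchwarz R T w := (additiveSchwarz_apply R w).symm
  have hcross : ∀ u : ∀ j, Vj j, ∑ j, ⟪S j (g j), u j⟫ = ⟪w, ∑ j, R j (u j)⟫ := fun u => by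
    simp [hSg, adjoint_inner_left, inner_sum]
  refine ⟨⟨g, hg, by rw [hcross, hg]⟩, ?_⟩
  rintro t ⟨u, hu, rfl⟩
  have hexpand : ∀ j, ⟪S j (u j), u j⟫ =
      ⟪S j (u j - g j), u j - g j⟫ + 2 * ⟪S j (g j), u j⟫ - ⟪S j (g j), g j⟫ := fun j => by
    have hsym : ⟪S j (u j), g j⟫ = ⟪S j (g j), u j⟫ := by
      rw [(hS j).isSymmetric, real_inner_comm]
    simp only [map_sub, inner_sub_left, inner_sub_right, hsym]
    ring
  have hnonneg : 0 ≤ ∑ j, ⟪S j (u j - g j), u j - g j⟫ :=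
    Finset.sum_nonneg fun j _ => (hS j).inner_nonneg_left _
  simp only [hexpand, Finset.sum_sub_distrib, Finset.sum_add_distrib, ← Finset.mul_sum, hcross, hu,
    hg]
  linarith

end AdditiveSchwarz

theorem stmt_9_general {V : Type*} [NormedAddCommGroup V] [InnerProductSpace ℝ V]
    [FiniteDimensional ℝ V]
    {J : ℕ} (Vj : Fin J → Type*) [∀ j, NormedAddCommGroup (Vj j)]
    [∀ j, InnerProductSpace ℝ (Vj j)] [∀ j, FiniteDimensional ℝ (Vj j)]
    (S : V →ₗ[ℝ] V)
    (hSsa : ∀ v w : V, ⟪S v, w⟫ = ⟪v, S w⟫) (hSpd : ∀ v : V, v ≠ 0 → 0 < ⟪S v, v⟫)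
    (Sj Sjinv : ∀ j, Vj j →ₗ[ℝ] Vj j)
    (hSjsa : ∀ j (x y : Vj j), ⟪Sj j x, y⟫ = ⟪x, Sj j y⟫)
    (hSjpd : ∀ j (x : Vj j), x ≠ 0 → 0 < ⟪Sj j x, x⟫)
    (hSjinv₂ : ∀ j, Sj j ∘ₗ Sjinv j = LinearMap.id)
    (R : ∀ j, Vj j →ₗ[ℝ] V)
    (hspan : (⨆ j, LinearMap.range (R j)) = ⊤)
    (B : V →ₗ[ℝ] V)
    (hB : B = ∑ j, (R j) ∘ₗ (Sjinv j) ∘ₗ (LinearMap.adjoint (R j)))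
    (lammax : ℝ)
    (hmax : IsGreatest {μ : ℝ | Module.End.HasEigenvalue (B ∘ₗ S) μ} lammax) :
    IsGreatest {r : ℝ | ∃ v : V, v ≠ 0 ∧ ∃ m : ℝ,
      IsLeast {t : ℝ | ∃ u : ∀ j, Vj j,
        (∑ j, R j (u j)) = v ∧ t = ∑ j, ⟪Sj j (u j), u j⟫} m ∧
      r = ⟪S v, v⟫ / m} lammax := by
  change B = additiveSchwarz R Sjinv at hB
  subst hB
  have hSj : ∀ j, (Sj j).IsPositive := fun j => (LinearMap.isPositive_iff _).mpr
    ⟨hSjsa j, fun x => (eq_or_ne x 0).elim (fun hx => by simp [hx]) fun hx => (hSjpd j x hx).le⟩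
  have hBpos : ∀ v, v ≠ 0 → 0 < ⟪additiveSchwarz R Sjinv v, v⟫ := fun v =>
    inner_additiveSchwarz_self_pos R
      (fun j _ => LinearMap.inner_map_self_pos_of_comp_eq_id (hSjpd j) (hSjinv₂ j)) hspan
  have hBinj := LinearMap.injective_of_inner_map_self_pos hBpos
  have hmin := isLeast_energy_additiveSchwarz R hSj hSjinv₂
  refine ⟨?_, ?_⟩
  · obtain ⟨w, hw⟩ := hmax.1.exists_hasEigenvector
    obtain ⟨hBw, hratio⟩ := LinearMap.apply_inv_smul_eq_of_hasEigenvector hBinj hSpd hw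
    exact ⟨w, hw.2, _, by simpa only [hBw] using hmin (lammax⁻¹ • S w), hratio.symm⟩
  · rintro r ⟨v, hv, m, hm, rfl⟩
    obtain ⟨w, rfl⟩ := (LinearMap.injective_iff_surjective.mp hBinj) v
    have : Nontrivial V := ⟨⟨_, 0, hv⟩⟩
    obtain ⟨μ, hμ, hle⟩ := LinearMap.exists_hasEigenvalue_comp_forall_inner_le
      (isSymmetric_additiveSchwarz R fun j =>
        LinearMap.IsSymmetric.of_comp_eq_id (hSjsa j) (hSjinv₂ j)) hBpos hSsa
    have hw : w ≠ 0 := fun h => hv (by rw [h, map_zero])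
    rw [hm.unique (hmin w), ← real_inner_comm w]
    exact ((div_le_iff₀ (hBpos w hw)).mpr (hle w)).trans (hmax.2 hμ)

/-- additive Schwarz lemma: the maximal eigenvalue of BS is
characterized by λ_max(BS) = max_{v≠0} a(v,v) / min_{v = Σ Rⱼ vⱼ} Σ aⱼ(vⱼ,vⱼ). -/
theorem stmt_9 {V : Type*} [NormedAddCommGroup V] [InnerProductSpace ℝ V]
    [FiniteDimensional ℝ V]
    {J : ℕ} (Vj : Fin J → Type*) [∀ j, NormedAddCommGroup (Vj j)]
    [∀ j, InnerProductSpace ℝ (Vj j)] [∀ j, FiniteDimensional ℝ (Vj j)]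
    (S : V →ₗ[ℝ] V)
    (hSsa : ∀ v w : V, ⟪S v, w⟫ = ⟪v, S w⟫) (hSpd : ∀ v : V, v ≠ 0 → 0 < ⟪S v, v⟫)
    (Sj Sjinv : ∀ j, Vj j →ₗ[ℝ] Vj j)
    (hSjsa : ∀ j (x y : Vj j), ⟪Sj j x, y⟫ = ⟪x, Sj j y⟫)
    (hSjpd : ∀ j (x : Vj j), x ≠ 0 → 0 < ⟪Sj j x, x⟫)
    (hSjinv₁ : ∀ j, Sjinv j ∘ₗ Sj j = LinearMap.id)
    (hSjinv₂ : ∀ j, Sj j ∘ₗ Sjinv j = LinearMap.id)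
    (R : ∀ j, Vj j →ₗ[ℝ] V)
    (hspan : (⨆ j, LinearMap.range (R j)) = ⊤)
    (B : V →ₗ[ℝ] V)
    (hB : B = ∑ j, (R j) ∘ₗ (Sjinv j) ∘ₗ (LinearMap.adjoint (R j)))
    (lammax : ℝ)
    (hmax : IsGreatest {μ : ℝ | Module.End.HasEigenvalue (B ∘ₗ S) μ} lammax) :
    IsGreatest {r : ℝ | ∃ v : V, v ≠ 0 ∧ ∃ m : ℝ,
      IsLeast {t : ℝ | ∃ u : ∀ j, Vj j,
        (∑ j, R j (u j)) = v ∧ t = ∑ j, ⟪Sj j (u j), u j⟫} m ∧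
      r = ⟪S v, v⟫ / m} lammax :=
  stmt_9_general Vj S hSsa hSpd Sj Sjinv hSjsa hSjpd hSjinv₂ R hspan B hB lammax hmax
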